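/- arXiv:2511.19441 — 2 statements merged into one kernel-verified Lean document; each statement's English description precedes it below -/
import Mathlib

section
/- For every smooth matrix field A : ℝ³ → M₃(ℝ), 2·vskw(curl A) = -div(S(A)), where vskw extracts the axial vector of the skew part, curl and div act column-wise, and S(A) = Aᵀ - tr(A)·I₃. -/
noncomputable section

/-- Levi-Civita symbol in three dimensions. -/
def lc (i j k : Fin 3) : ℝ :=
  if (i, j, k) = (0, 1, 2) ∨ (i, j, k) = (1, 2, 0) ∨ (i, j, k) = (2, 0, 1) then 1
  else if (i, j, k) = (0, 2, 1) ∨ (i, j, k) = (2, 1, 0) ∨ (i, j, k) = (1, 0, 2) then -1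
  else 0

/-- Partial derivative `∂ᵢ f` of a scalar field on `ℝ³`. -/
def pd (i : Fin 3) (f : (Fin 3 → ℝ) → ℝ) (x : Fin 3 → ℝ) : ℝ :=
  fderiv ℝ f x (Pi.single i 1)

/-- Curl of a vector field: `(curl v)ᵢ = εᵢⱼₖ ∂ⱼ vₖ`. -/
def vcurl (v : (Fin 3 → ℝ) → Fin 3 → ℝ) (x : Fin 3 → ℝ) (i : Fin 3) : ℝ :=
  ∑ j, ∑ k, lc i j k * pd j (fun y => v y k) x

/-- Column-wise curl of a matrix field: `(curl M)ᵢⱼ = εᵢₖₗ ∂ₖ Mₗⱼ`. -/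
def mcurl (M : (Fin 3 → ℝ) → Matrix (Fin 3) (Fin 3) ℝ) (x : Fin 3 → ℝ) :
    Matrix (Fin 3) (Fin 3) ℝ :=
  Matrix.of fun i j => ∑ k, ∑ l, lc i k l * pd k (fun y => M y l j) x

/-- Column-wise divergence of a matrix field: `(div M)ᵢ = ∂ⱼ Mⱼᵢ`. -/
def mdiv (M : (Fin 3 → ℝ) → Matrix (Fin 3) (Fin 3) ℝ) (x : Fin 3 → ℝ) (i : Fin 3) : ℝ :=
  ∑ j, pd j (fun y => M y j i) x

/-- The algebraic operator `S(A) = Aᵀ - tr(A)·I₃`. -/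
def Sop (A : Matrix (Fin 3) (Fin 3) ℝ) : Matrix (Fin 3) (Fin 3) ℝ :=
  A.transpose - A.trace • (1 : Matrix (Fin 3) (Fin 3) ℝ)

/-- `(mskw V)ᵢⱼ = -εᵢⱼₖ Vₖ`. -/
def mskw (V : Fin 3 → ℝ) : Matrix (Fin 3) (Fin 3) ℝ :=
  Matrix.of fun i j => -∑ k, lc i j k * V k

/-- `(vskw M)ᵢ = -(1/2) εᵢⱼₖ Mⱼₖ`. -/
def vskw (M : Matrix (Fin 3) (Fin 3) ℝ) : Fin 3 → ℝ :=
  fun i => -(1 / 2 : ℝ) * ∑ j, ∑ k, lc i j k * M j k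

/-!
Both sides reduce to `∂ᵢ tr A - ∂ₖ Aᵢₖ`. On the left this is the contraction
`εᵢⱼₖ εⱼₗₘ = δₖₗ δᵢₘ - δₖₘ δᵢₗ` of the two Levi-Civita symbols; on the right it is the
linearity of `∂` applied to the entries `Aᵢⱼ - δⱼᵢ tr A` of `S(A)`.
-/

theorem lc_mul_lc_sum (i k p q : Fin 3) :
    ∑ j, lc i j k * lc j p q =
      (if k = p ∧ i = q then 1 else 0) - (if k = q ∧ i = p then 1 else 0) := by
  fin_cases i <;> fin_cases k <;> fin_cases p <;> fin_cases q <;> simp [lc]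

theorem sum_lc_mul_sum_lc (T : Fin 3 → Fin 3 → Fin 3 → ℝ) (i : Fin 3) :
    ∑ j, ∑ k, lc i j k * ∑ p, ∑ q, lc j p q * T p q k = ∑ k, T k i k - ∑ k, T i k k := by
  calc ∑ j, ∑ k, lc i j k * ∑ p, ∑ q, lc j p q * T p q k
      = ∑ k, ∑ p, ∑ q, (∑ j, lc i j k * lc j p q) * T p q k := by
        simp only [Finset.mul_sum, Finset.sum_mul, mul_assoc]
        rw [Finset.sum_comm]
        refine Finset.sum_congr rfl fun k _ => ?_
        rw [Finset.sum_comm]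
        refine Finset.sum_congr rfl fun p _ => ?_
        exact Finset.sum_comm
    _ = ∑ k, T k i k - ∑ k, T i k k := by
        simp [lc_mul_lc_sum, sub_mul, ite_and, Finset.sum_sub_distrib]

theorem pd_sub {f g : (Fin 3 → ℝ) → ℝ} {x : Fin 3 → ℝ} (hf : DifferentiableAt ℝ f x)
    (hg : DifferentiableAt ℝ g x) (i : Fin 3) :
    pd i (fun y => f y - g y) x = pd i f x - pd i g x := by
  simp [pd, fderiv_fun_sub hf hg]

theorem pd_sum {ι : Type*} {s : Finset ι} {f : ι → (Fin 3 → ℝ) → ℝ} {x : Fin 3 → ℝ}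
    (hf : ∀ k ∈ s, DifferentiableAt ℝ (f k) x) (i : Fin 3) :
    pd i (fun y => ∑ k ∈ s, f k y) x = ∑ k ∈ s, pd i (f k) x := by
  simp [pd, fderiv_fun_sum hf]

theorem two_mul_vskw_mcurl (M : (Fin 3 → ℝ) → Matrix (Fin 3) (Fin 3) ℝ) (x : Fin 3 → ℝ)
    (i : Fin 3) :
    2 * vskw (mcurl M x) i =
      ∑ k, pd i (fun y => M y k k) x - ∑ k, pd k (fun y => M y i k) x := by
  have hcontract := sum_lc_mul_sum_lc (fun p q k => pd p (fun y => M y q k) x) i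
  simp only [vskw, mcurl, Matrix.of_apply] at hcontract ⊢
  rw [hcontract]
  ring

theorem mdiv_Sop {M : (Fin 3 → ℝ) → Matrix (Fin 3) (Fin 3) ℝ} {x : Fin 3 → ℝ}
    (hM : ∀ i j, DifferentiableAt ℝ (fun y => M y i j) x) (i : Fin 3) :
    mdiv (fun y => Sop (M y)) x i =
      ∑ j, pd j (fun y => M y i j) x - ∑ k, pd i (fun y => M y k k) x := by
  have htr : DifferentiableAt ℝ (fun y => (M y).trace) x :=
    DifferentiableAt.fun_sum fun k _ => hM k k
  have hSop : ∀ j, pd j (fun y => Sop (M y) j i) x =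
      pd j (fun y => M y i j) x - if j = i then pd i (fun y => (M y).trace) x else 0 := by
    intro j
    by_cases hji : j = i
    · subst hji
      simpa [Sop] using pd_sub (hM j j) htr j
    · simp [Sop, hji]
  rw [mdiv, Finset.sum_congr rfl fun j _ => hSop j, Finset.sum_sub_distrib, Finset.sum_ite_eq',
    if_pos (Finset.mem_univ i)]
  exact congrArg _ (pd_sum (fun k _ => hM k k) i)

theorem stmt_9 (A : (Fin 3 → ℝ) → Matrix (Fin 3) (Fin 3) ℝ)
    (hA : ∀ i j, ContDiff ℝ 1 fun x => A x i j) :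
    ∀ (x : Fin 3 → ℝ) (i : Fin 3),
      2 * vskw (mcurl A x) i = -mdiv (fun y => Sop (A y)) x i := by
  intro x i
  rw [two_mul_vskw_mcurl, mdiv_Sop (fun k l => (hA k l).differentiable one_ne_zero x)]
  ring

end
end

section
/- Let V be a finite-dimensional real inner product space, d : V → V linear with d∘d = 0, J : V → V a self-adjoint isometric involution with dJ = -Jd, and suppose the Poincaré inequality holds: there is c_p > 0 such that ‖v‖ ≤ c_p‖dv‖ for all v orthogonal to ker d. Let 𝔥 := ker d ∩ ker d* (harmonic elements) and define the bilinear form L(u,v) := ⟨Jdu, v⟩ - ⟨u, Jdv⟩. Then L is inf-sup stable on 𝔥^⊥ for the graph norm ‖v‖₁ := ‖v‖ + ‖dv‖: there exists C_L > 0 depending only on c_p such that for every u ∈ 𝔥^⊥, sup over nonzero w ∈ 𝔥^⊥ of L(u,w)/‖w‖₁ is at least C_L‖u‖₁. One may take C_L = 1/(2·max{1,c_p²}·(1+c_p)). -/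
open scoped RealInnerProductSpace

/-!
Split `u ∈ 𝔥ᗮ` as `u = d z + v` with `z, v ⊥ ker d`; this is possible because
`ker d ∩ 𝔥ᗮ = range d`, as `𝔥 = ker d ∩ (range d)ᗮ` and `range d ≤ ker d`.
The test vector `w = s² J du + J z`, `s = 1 + c_p`, lies in `𝔥ᗮ` and has `dw = -J dz`, so
`L(u, w) = s²‖du‖² + ‖dz‖²`, while the Poincaré inequality applied to `z` and `v` gives
`‖w‖₁ ≤ s (s‖du‖ + ‖dz‖)` and `‖u‖₁ ≤ s‖du‖ + ‖dz‖`. Hence `L(u, w) / ‖w‖₁ ≥ ‖u‖₁ / (2s)`,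
since `2 (s²‖du‖² + ‖dz‖²) ≥ (s‖du‖ + ‖dz‖)²`. Here `L = skewForm J d` and `‖·‖₁ = graphNorm d`.
-/

namespace LinearMap

open Submodule

variable {V : Type*} [NormedAddCommGroup V] [InnerProductSpace ℝ V]

def graphNorm (d : V →ₗ[ℝ] V) (v : V) : ℝ := ‖v‖ + ‖d v‖

def skewForm (J d : V →ₗ[ℝ] V) (u w : V) : ℝ := ⟪J (d u), w⟫ - ⟪u, J (d w)⟫

theorem skewForm_le_graphNorm_mul {J : V →ₗ[ℝ] V} (hJiso : ∀ v, ‖J v‖ = ‖v‖) (d : V →ₗ[ℝ] V)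
    (u w : V) : skewForm J d u w ≤ graphNorm d u * graphNorm d w := by
  have h₁ : ⟪J (d u), w⟫ ≤ ‖d u‖ * ‖w‖ := hJiso (d u) ▸ real_inner_le_norm _ _
  have h₂ : -(‖u‖ * ‖d w‖) ≤ ⟪u, J (d w)⟫ :=
    hJiso (d w) ▸ neg_le_of_abs_le (abs_real_inner_le_norm _ _)
  unfold skewForm graphNorm
  nlinarith [norm_nonneg u, norm_nonneg (d u), norm_nonneg w, norm_nonneg (d w)]

theorem skewForm_div_graphNorm_le {J : V →ₗ[ℝ] V} (hJiso : ∀ v, ‖J v‖ = ‖v‖) (d : V →ₗ[ℝ] V)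
    (u w : V) : skewForm J d u w / graphNorm d w ≤ graphNorm d u :=
  div_le_of_le_mul₀ (by unfold graphNorm; positivity) (by unfold graphNorm; positivity)
    (skewForm_le_graphNorm_mul hJiso d u w)

theorem exists_mem_orthogonal_ker_apply_eq {W : Type*} [AddCommGroup W] [Module ℝ W]
    (f : V →ₗ[ℝ] W) [(ker f).HasOrthogonalProjection] {x : W} (hx : x ∈ range f) :
    ∃ z ∈ (ker f)ᗮ, f z = x := by
  obtain ⟨y, rfl⟩ := hx
  refine ⟨y - (ker f).starProjection y, sub_starProjection_mem_orthogonal y, ?_⟩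
  rw [map_sub, (ker f).starProjection_apply_mem y, sub_zero]

variable {d J : V →ₗ[ℝ] V}

theorem apply_smul_apply_apply_add_apply (hd : d ∘ₗ d = 0) (hanti : d ∘ₗ J = -(J ∘ₗ d))
    (c : ℝ) (u z : V) : d (c • J (d u) + J z) = -J (d z) := by
  have hdJ : ∀ x, d (J x) = -J (d x) := LinearMap.congr_fun hanti
  have hdd : ∀ x, d (d x) = 0 := LinearMap.congr_fun hd
  simp [hdJ, hdd]

theorem skewForm_smul_apply_apply_add_apply (hd : d ∘ₗ d = 0) (hJ : J.IsSymmetric)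
    (hJiso : ∀ v, ‖J v‖ = ‖v‖) (hJinv : J ∘ₗ J = LinearMap.id) (hanti : d ∘ₗ J = -(J ∘ₗ d))
    {u z : V} (hz : z ∈ (ker d)ᗮ) (hv : u - d z ∈ (ker d)ᗮ) (c : ℝ) :
    skewForm J d u (c • J (d u) + J z) = c * ‖d u‖ ^ 2 + ‖d z‖ ^ 2 := by
  have hJJ : ∀ x, J (J x) = x := LinearMap.congr_fun hJinv
  have hdu : d u ∈ ker d := LinearMap.congr_fun hd u
  have hcross : ⟪J (d u), J z⟫ = 0 := by
    rw [hJ, hJJ, inner_right_of_mem_orthogonal hdu hz]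
  have hdiag : ⟪u, d z⟫ = ‖d z‖ ^ 2 := by
    rw [← sub_add_cancel u (d z), inner_add_left, real_inner_self_eq_norm_sq,
      inner_left_of_mem_orthogonal (LinearMap.congr_fun hd z) hv, zero_add]
  rw [skewForm, apply_smul_apply_apply_add_apply hd hanti, map_neg, hJJ, inner_add_right,
    real_inner_smul_right, real_inner_self_eq_norm_sq, hJiso, hcross, inner_neg_right, hdiag]
  ring

variable [FiniteDimensional ℝ V]

noncomputable def harmonic (d : V →ₗ[ℝ] V) : Submodule ℝ V := ker d ⊓ ker d.adjoint

theorem orthogonal_harmonic (d : V →ₗ[ℝ] V) : (harmonic d)ᗮ = range d ⊔ (ker d)ᗮ := by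
  have : harmonic d = ((ker d)ᗮ ⊔ range d)ᗮ := by
    rw [← inf_orthogonal, orthogonal_orthogonal, orthogonal_range, harmonic]
  rw [this, orthogonal_orthogonal, sup_comm]

theorem ker_inf_orthogonal_harmonic (hd : d ∘ₗ d = 0) :
    ker d ⊓ (harmonic d)ᗮ = range d := by
  rw [orthogonal_harmonic, inf_comm, sup_inf_assoc_of_le _ (range_le_ker_iff.mpr hd),
    inf_comm, inf_orthogonal_eq_bot, sup_bot_eq]

theorem exists_mem_orthogonal_ker_sub_mem_orthogonal_ker (hd : d ∘ₗ d = 0) {u : V}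
    (hu : u ∈ (harmonic d)ᗮ) : ∃ z ∈ (ker d)ᗮ, u - d z ∈ (ker d)ᗮ := by
  have hK : (ker d)ᗮ ≤ (harmonic d)ᗮ := orthogonal_le inf_le_left
  have hproj : (ker d).starProjection u ∈ range d := by
    rw [← ker_inf_orthogonal_harmonic hd]
    refine ⟨starProjection_apply_mem _ u, ?_⟩
    simpa using sub_mem hu (hK (sub_starProjection_mem_orthogonal u))
  obtain ⟨z, hz, hdz⟩ := exists_mem_orthogonal_ker_apply_eq d hproj
  exact ⟨z, hz, hdz ▸ sub_starProjection_mem_orthogonal u⟩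

theorem adjoint_comp_eq_neg (hJ : J.IsSymmetric) (hanti : d ∘ₗ J = -(J ∘ₗ d)) :
    d.adjoint ∘ₗ J = -(J ∘ₗ d.adjoint) := by
  rw [← neg_eq_iff_eq_neg]
  simpa [hJ.adjoint_eq] using (congrArg adjoint hanti).symm

theorem harmonic_mem_invtSubmodule (hJ : J.IsSymmetric) (hanti : d ∘ₗ J = -(J ∘ₗ d)) :
    harmonic d ∈ Module.End.invtSubmodule J := by
  rw [Module.End.mem_invtSubmodule_iff_forall_mem_of_mem]
  rintro h ⟨hdh, hd'h⟩
  constructor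
  · simpa [mem_ker.mp hdh] using LinearMap.congr_fun hanti h
  · simpa [mem_ker.mp hd'h] using LinearMap.congr_fun (adjoint_comp_eq_neg hJ hanti) h

theorem smul_apply_apply_add_apply_mem_orthogonal_harmonic (hJ : J.IsSymmetric)
    (hanti : d ∘ₗ J = -(J ∘ₗ d)) {z : V} (hz : z ∈ (ker d)ᗮ) (c : ℝ) (u : V) :
    c • J (d u) + J z ∈ (harmonic d)ᗮ := by
  have hinv := hJ.orthogonalComplement_mem_invtSubmodule (harmonic_mem_invtSubmodule hJ hanti)
  rw [Module.End.mem_invtSubmodule_iff_forall_mem_of_mem] at hinv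
  rw [orthogonal_harmonic] at hinv ⊢
  exact add_mem (smul_mem _ c (hinv _ (mem_sup_left (mem_range_self d u))))
    (hinv _ (mem_sup_right hz))

theorem exists_le_skewForm_div_graphNorm (hd : d ∘ₗ d = 0) (hJ : J.IsSymmetric)
    (hJiso : ∀ v, ‖J v‖ = ‖v‖) (hJinv : J ∘ₗ J = LinearMap.id) (hanti : d ∘ₗ J = -(J ∘ₗ d))
    {cp : ℝ} (hcp : 0 < cp) (hpoincare : ∀ v ∈ (ker d)ᗮ, ‖v‖ ≤ cp * ‖d v‖)
    {u : V} (hu : u ∈ (harmonic d)ᗮ) (hu0 : u ≠ 0) :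
    ∃ w ∈ (harmonic d)ᗮ, w ≠ 0 ∧
      1 / (2 * (1 + cp)) * graphNorm d u ≤ skewForm J d u w / graphNorm d w := by
  obtain ⟨z, hz, hv⟩ := exists_mem_orthogonal_ker_sub_mem_orthogonal_ker hd hu
  have hdd : ∀ x, d (d x) = 0 := LinearMap.congr_fun hd
  set s := 1 + cp
  have hs_pos : 0 < s := by linarith
  set a := ‖d u‖
  set b := ‖d z‖
  set w := s ^ 2 • J (d u) + J z
  have hu_le : ‖u‖ ≤ b + cp * a := by
    have hdv : d (u - d z) = d u := by rw [map_sub, hdd, sub_zero]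
    calc ‖u‖ = ‖d z + (u - d z)‖ := by rw [add_sub_cancel]
      _ ≤ b + ‖u - d z‖ := norm_add_le _ _
      _ ≤ b + cp * a := by grw [hpoincare _ hv, hdv]
  have hw_le : ‖w‖ ≤ s ^ 2 * a + cp * b := by
    calc ‖w‖ ≤ ‖s ^ 2 • J (d u)‖ + ‖J z‖ := norm_add_le _ _
      _ = s ^ 2 * a + ‖z‖ := by
        rw [norm_smul, hJiso, hJiso, Real.norm_of_nonneg (by positivity)]
      _ ≤ s ^ 2 * a + cp * b := by grw [hpoincare z hz]
  have hdw : ‖d w‖ = b := by rw [apply_smul_apply_apply_add_apply hd hanti, norm_neg, hJiso]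
  have hL : skewForm J d u w = s ^ 2 * a ^ 2 + b ^ 2 :=
    skewForm_smul_apply_apply_add_apply hd hJ hJiso hJinv hanti hz hv _
  have hu_pos : 0 < ‖u‖ := norm_pos_iff.mpr hu0
  have hL_pos : 0 < s ^ 2 * a ^ 2 + b ^ 2 := by
    have hsa : cp ^ 2 * a ^ 2 ≤ s ^ 2 * a ^ 2 := by gcongr; linarith
    nlinarith [mul_pos hu_pos hu_pos, mul_self_le_mul_self hu_pos.le hu_le, sq_nonneg (b - cp * a)]
  have hw0 : w ≠ 0 := by
    rintro hw
    rw [hw, skewForm, map_zero, map_zero, inner_zero_right, inner_zero_right, sub_zero] at hL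
    linarith
  have hN_pos : 0 < graphNorm d w := by unfold graphNorm; positivity
  refine ⟨w, smul_apply_apply_add_apply_mem_orthogonal_harmonic hJ hanti hz _ u, hw0, ?_⟩
  rw [hL, one_div_mul_eq_div, div_le_div_iff₀ (by positivity) hN_pos]
  have hX : graphNorm d u ≤ s * a + b := by unfold graphNorm; linarith
  have hN : graphNorm d w ≤ s * (s * a + b) := by unfold graphNorm; linarith
  nlinarith [mul_le_mul hX hN hN_pos.le (by positivity), mul_nonneg hs_pos.le (sq_nonneg (s * a - b))]

end LinearMap

theorem stmt_16 {V : Type*} [NormedAddCommGroup V] [InnerProductSpace ℝ V]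
    [FiniteDimensional ℝ V]
    (d : V →ₗ[ℝ] V) (hd : d ∘ₗ d = 0)
    (J : V →ₗ[ℝ] V) (hJsa : ∀ u v : V, ⟪J u, v⟫ = ⟪u, J v⟫)
    (hJiso : ∀ v : V, ‖J v‖ = ‖v‖) (hJinv : J ∘ₗ J = LinearMap.id)
    (hanti : d ∘ₗ J = -(J ∘ₗ d))
    (cp : ℝ) (hcp : 0 < cp)
    (hpoincare : ∀ v ∈ (LinearMap.ker d)ᗮ, ‖v‖ ≤ cp * ‖d v‖) :
    ∀ u ∈ (LinearMap.ker d ⊓ LinearMap.ker (LinearMap.adjoint d))ᗮ,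
      (1 / (2 * max 1 (cp ^ 2) * (1 + cp))) * (‖u‖ + ‖d u‖) ≤
        ⨆ w : {w : V // w ∈ (LinearMap.ker d ⊓ LinearMap.ker (LinearMap.adjoint d))ᗮ ∧ w ≠ 0},
          (⟪J (d u), (w : V)⟫ - ⟪u, J (d (w : V))⟫) / (‖(w : V)‖ + ‖d (w : V)‖) := by
  intro u hu
  rcases eq_or_ne u 0 with rfl | hu0
  · simp
  obtain ⟨w, hw, hw0, hle⟩ :=
    LinearMap.exists_le_skewForm_div_graphNorm hd hJsa hJiso hJinv hanti hcp hpoincare hu hu0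
  calc 1 / (2 * max 1 (cp ^ 2) * (1 + cp)) * (‖u‖ + ‖d u‖)
      ≤ 1 / (2 * (1 + cp)) * LinearMap.graphNorm d u := by
        unfold LinearMap.graphNorm
        gcongr
        exact le_mul_of_one_le_right zero_le_two (le_max_left _ _)
    _ ≤ _ := hle
    _ ≤ _ := by
      refine le_ciSup_of_le ⟨LinearMap.graphNorm d u, ?_⟩ ⟨w, hw, hw0⟩ le_rfl
      rintro _ ⟨v, rfl⟩
      exact LinearMap.skewForm_div_graphNorm_le hJiso d u v
end
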